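/- arXiv:2503.05436 — 3 statements merged into one kernel-verified Lean document; each statement's English description precedes it below -/
import Mathlib

section
/- Let φ : ℝ^m → ℝ^m be continuously differentiable with φ ∘ φ = id and φ(0) = 0, and set Q := Dφ(0). Define σ : ℝ^m → ℝ^m by σ(x) = x + Q(φ(x)). Then σ(φ(x)) = Q(σ(x)) for all x ∈ ℝ^m, and Dσ(0) = 2 · id; consequently σ restricts to a C¹-diffeomorphism between neighborhoods of 0, which conjugates φ to the linear involution Q near the origin. -/
/-!
Since `φ` is an involution fixing `0`, the chain rule gives `Q ∘ Q = id`. Then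
`σ (φ x) = φ x + Q x = Q (Q (φ x) + x) = Q (σ x)`, and `Dσ(0) = id + Q ∘ Q = 2 • id` is
invertible, so the inverse function theorem makes `σ` a local `C¹`-diffeomorphism at `0`.
-/

open Function Set

section Involution

variable {𝕜 : Type*} [NontriviallyNormedField 𝕜] {E : Type*} [NormedAddCommGroup E]
  [NormedSpace 𝕜 E] {φ : E → E} {x₀ : E}

theorem Function.Involutive.fderiv_comp_fderiv_of_apply_eq_self (hφ : Involutive φ)
    (hx₀ : φ x₀ = x₀) (hd : DifferentiableAt 𝕜 φ x₀) :
    (fderiv 𝕜 φ x₀).comp (fderiv 𝕜 φ x₀) = ContinuousLinearMap.id 𝕜 E := by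
  have hcomp := fderiv_comp x₀ (hx₀.symm ▸ hd : DifferentiableAt 𝕜 φ (φ x₀)) hd
  rwa [hφ.comp_self, fderiv_id, hx₀, eq_comm] at hcomp

theorem Function.Involutive.hasFDerivAt_add_comp_of_apply_eq_self (hφ : Involutive φ)
    (hx₀ : φ x₀ = x₀) {Q : E →L[𝕜] E} (hQ : HasFDerivAt φ Q x₀) :
    HasFDerivAt (fun x => x + Q (φ x)) ((2 : 𝕜) • ContinuousLinearMap.id 𝕜 E) x₀ := by
  have hQQ : Q.comp Q = ContinuousLinearMap.id 𝕜 E := by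
    simpa only [hQ.fderiv] using
      hφ.fderiv_comp_fderiv_of_apply_eq_self hx₀ hQ.differentiableAt
  have h := (hasFDerivAt_id x₀).add (Q.hasFDerivAt.comp x₀ hQ)
  rwa [hQQ, ← two_smul 𝕜] at h

end Involution

theorem Function.Involutive.add_map_comp_eq_map_add {E F : Type*} [AddCommGroup E]
    [FunLike F E E] [AddMonoidHomClass F E E] {φ : E → E} (hφ : Involutive φ) {Q : F}
    (hQ : Involutive Q) (x : E) : φ x + Q (φ (φ x)) = Q (x + Q (φ x)) := by
  rw [hφ x, map_add, hQ, add_comm]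

theorem ContDiffAt.exists_bijOn_contDiffOn_invFunOn {𝕜 : Type*} [RCLike 𝕜] {E F : Type*}
    [NormedAddCommGroup E] [NormedSpace 𝕜 E] [CompleteSpace E] [NormedAddCommGroup F]
    [NormedSpace 𝕜 F] {f : E → F} {f' : E ≃L[𝕜] F} {a : E} {n : ℕ}
    (hf : ContDiffAt 𝕜 n f a) (hf' : HasFDerivAt f (f' : E →L[𝕜] F) a) (hn : n ≠ 0) :
    ∃ U V, IsOpen U ∧ IsOpen V ∧ a ∈ U ∧ f a ∈ V ∧ BijOn f U V ∧
      ContDiffOn 𝕜 n (invFunOn f U) V := by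
  have hn' : (n : WithTop ℕ∞) ≠ 0 := by exact_mod_cast hn
  set e := hf.toOpenPartialHomeomorph f hf' hn'
  obtain ⟨u, hu, hsymm⟩ :=
    (hf.to_localInverse hf' hn').contDiffOn le_rfl (by simp)
  have he : (e : E → F) = f := rfl
  set V := e.target ∩ interior u
  set U := e.source ∩ f ⁻¹' V
  have hV : IsOpen V := e.open_target.inter isOpen_interior
  have hfa : f a ∈ V :=
    ⟨hf.image_mem_toOpenPartialHomeomorph_target hf' hn', mem_interior_iff_mem_nhds.2 hu⟩
  have hsurj : SurjOn f U V := fun y hy =>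
    ⟨e.symm y, ⟨e.map_target hy.1, by simpa [← he, e.right_inv hy.1] using hy⟩,
      e.right_inv hy.1⟩
  have hinj : InjOn f U := he ▸ e.injOn.mono inter_subset_left
  refine ⟨U, V, e.isOpen_inter_preimage hV, hV,
    ⟨hf.mem_toOpenPartialHomeomorph_source hf' hn', hfa⟩, hfa, ⟨fun _ hx => hx.2, hinj, hsurj⟩,
    ?_⟩
  have hinv : EqOn (invFunOn f U) e.symm V := fun y hy => by
    obtain ⟨x, hx, rfl⟩ := hsurj hy
    rw [hinj.leftInvOn_invFunOn hx, ← he, e.left_inv hx.1]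
  exact (hsymm.mono fun _ hy => interior_subset hy.2).congr hinv

/-- Local linearization of a `C¹` involution `φ` of `ℝ^m` fixing the origin: with
`Q = Dφ(0)` and `σ x = x + Q (φ x)`, one has `σ ∘ φ = Q ∘ σ` and `Dσ(0) = 2·id`;
consequently `σ` restricts to a `C¹`-diffeomorphism between neighborhoods of `0`
which conjugates `φ` to the linear involution `Q` near the origin. -/
theorem involution_locally_conjugate_to_linear
    (m : ℕ) (φ : EuclideanSpace ℝ (Fin m) → EuclideanSpace ℝ (Fin m))
    (hφ : ContDiff ℝ 1 φ) (hinv : φ ∘ φ = id) (h0 : φ 0 = 0)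
    (Q : EuclideanSpace ℝ (Fin m) →L[ℝ] EuclideanSpace ℝ (Fin m)) (hQ : Q = fderiv ℝ φ 0)
    (σ : EuclideanSpace ℝ (Fin m) → EuclideanSpace ℝ (Fin m))
    (hσ : ∀ x, σ x = x + Q (φ x)) :
    (∀ x, σ (φ x) = Q (σ x)) ∧
    fderiv ℝ σ 0 = (2 : ℝ) • ContinuousLinearMap.id ℝ (EuclideanSpace ℝ (Fin m)) ∧
    ∃ U V : Set (EuclideanSpace ℝ (Fin m)),
      IsOpen U ∧ IsOpen V ∧ (0 : EuclideanSpace ℝ (Fin m)) ∈ U ∧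
      (0 : EuclideanSpace ℝ (Fin m)) ∈ V ∧
      Set.BijOn σ U V ∧ ContDiffOn ℝ 1 σ U ∧
      ContDiffOn ℝ 1 (Function.invFunOn σ U) V ∧
      ∀ x ∈ U, σ (φ x) = Q (σ x) := by
  have hφinv : Involutive φ := congrFun hinv
  have hQφ : HasFDerivAt φ Q 0 := hQ ▸ (hφ.differentiable one_ne_zero 0).hasFDerivAt
  have hQinv : Involutive Q := fun x => by
    simpa [hQ] using congrArg (· x) <|
      hφinv.fderiv_comp_fderiv_of_apply_eq_self h0 hQφ.differentiableAt
  have hconj : ∀ x, σ (φ x) = Q (σ x) := fun x => by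
    simpa only [hσ] using hφinv.add_map_comp_eq_map_add hQinv x
  have hσfun : σ = fun x => x + Q (φ x) := funext hσ
  have hσd : HasFDerivAt σ ((2 : ℝ) • ContinuousLinearMap.id ℝ _) 0 :=
    hσfun ▸ hφinv.hasFDerivAt_add_comp_of_apply_eq_self h0 hQφ
  let two : EuclideanSpace ℝ (Fin m) ≃L[ℝ] EuclideanSpace ℝ (Fin m) :=
    ContinuousLinearEquiv.smulLeft (Units.mk0 (2 : ℝ) two_ne_zero)
  have hσ' : HasFDerivAt σ (two : EuclideanSpace ℝ (Fin m) →L[ℝ] _) 0 :=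
    hσd.congr_fderiv (ContinuousLinearMap.ext fun _ => rfl)
  have hσC : ContDiff ℝ 1 σ := hσfun ▸ contDiff_id.add (Q.contDiff.comp hφ)
  obtain ⟨U, V, hU, hV, h0U, h0V, hbij, hinvσ⟩ :=
    hσC.contDiffAt.exists_bijOn_contDiffOn_invFunOn hσ' one_ne_zero
  refine ⟨hconj, hσd.fderiv, U, V, hU, hV, h0U, ?_, hbij, hσC.contDiffOn, hinvσ,
    fun x _ => hconj x⟩
  simpa [hσ, h0] using h0V
end

section
/- Fix real numbers α, β, let Y(x,y) = (−y + x(x² + y² + α), x − y(x² + y² + α) + β), and define R(α,β) = −256(α² − 1)³ − 192α(α⁴ + 7α² + 28)β² + 60(α⁴ − 28α² − 72)β⁴ − 4α(α² − 108)β⁶ − 27β⁸. Suppose y₀ > 0, Y(x₀, y₀) = (0,0), and the Jacobian matrix DY(x₀, y₀) has a complex eigenvalue with zero real part (i.e., the singularity (x₀,y₀) is non-hyperbolic). Then β = 0 or R(α, β) = 0. -/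
/-- The cubic planar vector field `Y(x,y) = (−y + x(x² + y² + α), x − y(x² + y² + α) + β)`. -/
noncomputable def Yfield (α β : ℝ) (p : ℝ × ℝ) : ℝ × ℝ :=
  (-p.2 + p.1 * (p.1 ^ 2 + p.2 ^ 2 + α), p.1 - p.2 * (p.1 ^ 2 + p.2 ^ 2 + α) + β)

/-- The resultant-type polynomial `R(α,β)`. -/
def Rres (α β : ℝ) : ℝ :=
  -256 * (α ^ 2 - 1) ^ 3 - 192 * α * (α ^ 4 + 7 * α ^ 2 + 28) * β ^ 2 +
    60 * (α ^ 4 - 28 * α ^ 2 - 72) * β ^ 4 - 4 * α * (α ^ 2 - 108) * β ^ 6 -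
    27 * β ^ 8

/-- If `(x₀, y₀)` with `y₀ > 0` is a zero of `Y` whose Jacobian matrix has a complex
eigenvalue with zero real part (i.e. the singularity is non-hyperbolic), then
`β = 0` or `R(α, β) = 0`. -/
theorem Yfield_nonhyperbolic_singularity (α β x₀ y₀ : ℝ) (hy : 0 < y₀)
    (hzero : Yfield α β (x₀, y₀) = 0)
    (hnonhyp : ∃ μ : ℂ, μ.re = 0 ∧
      (Matrix.charpoly
        ((!![3 * x₀ ^ 2 + y₀ ^ 2 + α, 2 * x₀ * y₀ - 1;
             1 - 2 * x₀ * y₀, -(x₀ ^ 2 + 3 * y₀ ^ 2 + α)] :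
          Matrix (Fin 2) (Fin 2) ℝ).map (fun r => (r : ℂ)))).IsRoot μ) :
    β = 0 ∨ Rres α β = 0 := by
  obtain ⟨μ, hre, hroot⟩ := hnonhyp
  -- extract the characteristic equation over ℂ
  rw [Matrix.charpoly, Matrix.det_fin_two] at hroot
  simp [Polynomial.IsRoot, Matrix.charmatrix_apply_eq, Matrix.charmatrix_apply_ne,
    Matrix.map_apply] at hroot
  -- real and imaginary parts
  have key : (μ - ((3 * x₀ ^ 2 + y₀ ^ 2 + α : ℝ) : ℂ)) *
      (μ - ((-(x₀ ^ 2 + 3 * y₀ ^ 2 + α) : ℝ) : ℂ)) -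
      ((2 * x₀ * y₀ - 1 : ℝ) : ℂ) * ((1 - 2 * x₀ * y₀ : ℝ) : ℂ) = 0 := by
    push_cast
    linear_combination hroot
  have h1 := congrArg Complex.re key
  have h2 := congrArg Complex.im key
  simp only [Complex.add_re, Complex.add_im, Complex.mul_re, Complex.mul_im, Complex.sub_re,
    Complex.sub_im, Complex.neg_re, Complex.neg_im, Complex.ofReal_re, Complex.ofReal_im,
    Complex.zero_re, Complex.zero_im, hre] at h1 h2
  clear key hroot
  -- vector field equations
  simp only [Yfield, Prod.mk.injEq, Prod.ext_iff, Prod.fst_zero, Prod.snd_zero] at hzero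
  obtain ⟨e1, e2⟩ := hzero
  have hx : x₀ ≠ 0 := by
    rintro rfl; simp at e1; linarith
  have hu2 : x₀ * (x₀ ^ 2 + y₀ ^ 2 + α) ^ 2 = x₀ + β := by
    linear_combination (x₀ ^ 2 + y₀ ^ 2 + α) * e1 - e2
  have hw : x₀ ^ 2 + y₀ ^ 2 + α = 2 * x₀ ^ 2 + β * x₀ + α := by
    linear_combination x₀ * hu2 - (y₀ + x₀ * (x₀ ^ 2 + y₀ ^ 2 + α)) * e1
  have hU : y₀ = x₀ * (2 * x₀ ^ 2 + β * x₀ + α) := by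
    linear_combination (-1 : ℝ) * e1 + x₀ * hw
  subst hU
  -- the quintic
  have hxq : x₀ * (4 * x₀ ^ 5 + 4 * β * x₀ ^ 4 + (β ^ 2 + 4 * α) * x₀ ^ 3 +
      2 * α * β * x₀ ^ 2 + (α ^ 2 - 1) * x₀ - β) = 0 := by
    linear_combination hw
  have hq : 4 * x₀ ^ 5 + 4 * β * x₀ ^ 4 + (β ^ 2 + 4 * α) * x₀ ^ 3 +
      2 * α * β * x₀ ^ 2 + (α ^ 2 - 1) * x₀ - β = 0 :=
    (mul_eq_zero.mp hxq).resolve_left hx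
  -- imaginary part: trace * μ.im = 0
  have h2' : μ.im * (2 * (x₀ * (2 * x₀ ^ 2 + β * x₀ + α)) ^ 2 - 2 * x₀ ^ 2) = 0 := by
    linear_combination h2
  rcases mul_eq_zero.mp h2' with hm | hT
  · -- μ.im = 0 : the determinant vanishes
    right
    have hD : (3 * x₀ ^ 2 + (x₀ * (2 * x₀ ^ 2 + β * x₀ + α)) ^ 2 + α) *
        (-(x₀ ^ 2 + 3 * (x₀ * (2 * x₀ ^ 2 + β * x₀ + α)) ^ 2 + α)) -
        (2 * x₀ * (x₀ * (2 * x₀ ^ 2 + β * x₀ + α)) - 1) *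
        (1 - 2 * x₀ * (x₀ * (2 * x₀ ^ 2 + β * x₀ + α))) = 0 := by
      linear_combination h1 + μ.im * hm
    have hq' : 20 * x₀ ^ 4 + 16 * β * x₀ ^ 3 + (3 * β ^ 2 + 12 * α) * x₀ ^ 2 +
        4 * α * β * x₀ + (α ^ 2 - 1) = 0 := by
      linear_combination (-1 : ℝ) * hD +
        (-4 * α * x₀ - 3 * β * x₀ ^ 2 - 9 * x₀ ^ 3 - 3 * α ^ 2 * x₀ ^ 3 - 6 * α * β * x₀ ^ 4 -
          (3 * β ^ 2 + 12 * α) * x₀ ^ 5 - 12 * β * x₀ ^ 6 - 12 * x₀ ^ 7) * hq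
    unfold Rres
    linear_combination
      ((4656 * β ^ 3 + 27 * β ^ 7 + 4576 * α * β + (-426) * α * β ^ 5 + 1264 * α ^ 2 * β ^ 3 +
          2368 * α ^ 3 * β + (-2) * α ^ 3 * β ^ 5 + 20 * α ^ 4 * β ^ 3 + (-32) * α ^ 5 * β) +
        ((-3936) * β ^ 2 + (-18) * β ^ 6 + (-4480) * α + (-1080) * α * β ^ 4 +
          6320 * α ^ 2 * β ^ 2 + (-6) * α ^ 2 * β ^ 6 + 4352 * α ^ 3 + 56 * α ^ 3 * β ^ 4 +
          (-80) * α ^ 4 * β ^ 2 + 128 * α ^ 5) * x₀ +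
        (2560 * β + (-1008) * β ^ 5 + 5536 * α * β ^ 3 + 8896 * α ^ 2 * β +
          (-32) * α ^ 2 * β ^ 5 + 248 * α ^ 3 * β ^ 3 + 64 * α ^ 4 * β) * x₀ ^ 2 +
        ((-6400) + (-2160) * β ^ 4 + 14720 * α * β ^ 2 + 5120 * α ^ 2 + (-40) * α ^ 2 * β ^ 4 +
          160 * α ^ 3 * β ^ 2 + 1280 * α ^ 4) * x₀ ^ 3) * hq +
      (((-256) + (-336) * β ^ 4 + 800 * α * β ^ 2 + (-6) * α * β ^ 6 + 512 * α ^ 2 +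
          80 * α ^ 2 * β ^ 4 + (-224) * α ^ 3 * β ^ 2 + (-256) * α ^ 4) +
        ((-720) * β ^ 3 + (-9) * β ^ 7 + (-1120) * α * β + 162 * α * β ^ 5 +
          (-448) * α ^ 2 * β ^ 3 + (-1216) * α ^ 3 * β + 2 * α ^ 3 * β ^ 5 +
          (-20) * α ^ 4 * β ^ 3 + 32 * α ^ 5 * β) * x₀ +
        (608 * β ^ 2 + 18 * β ^ 6 + 1408 * α + 344 * α * β ^ 4 + (-2736) * α ^ 2 * β ^ 2 +
          2 * α ^ 2 * β ^ 6 + (-1280) * α ^ 3 + (-16) * α ^ 3 * β ^ 4 + 16 * α ^ 4 * β ^ 2 +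
          (-128) * α ^ 5) * x₀ ^ 2 +
        ((-256) * β + 288 * β ^ 5 + (-1696) * α * β ^ 3 + (-1984) * α ^ 2 * β +
          8 * α ^ 2 * β ^ 5 + (-56) * α ^ 3 * β ^ 3 + (-64) * α ^ 4 * β) * x₀ ^ 3 +
        (1280 + 432 * β ^ 4 + (-2944) * α * β ^ 2 + (-1024) * α ^ 2 + 8 * α ^ 2 * β ^ 4 +
          (-32) * α ^ 3 * β ^ 2 + (-256) * α ^ 4) * x₀ ^ 4) * hq'
  · -- trace = 0 : then β = 0
    left
    have h5 : x₀ ^ 2 * ((2 * x₀ ^ 2 + β * x₀ + α) ^ 2 - 1) = 0 := by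
      linear_combination (1 / 2 : ℝ) * hT
    rcases mul_eq_zero.mp h5 with h6 | h6
    · exact absurd (pow_eq_zero_iff two_ne_zero |>.mp h6) hx
    · linear_combination (-1 : ℝ) * hq + x₀ * h6
end

section
/- Define R(α,β) = −256(α² − 1)³ − 192α(α⁴ + 7α² + 28)β² + 60(α⁴ − 28α² − 72)β⁴ − 4α(α² − 108)β⁶ − 27β⁸. For every real α ≤ 0 one has R(α, −√(−α)) = 256 + 288α² − 27α⁴; moreover, the quartic 256 + 288α² − 27α⁴ has exactly one real root α with α ≤ −1, namely α₀ = −(4/3)√(3 + 2√3). (Consequently (α₀, −√(−α₀)) is the unique intersection point with β < 0 of the parabola α + β² = 0 with the curve R(α,β) = 0.) -/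
/-- Along the parabola `β = −√(−α)` (i.e. `α + β² = 0`, `β < 0`) one has
`R(α, −√(−α)) = 256 + 288α² − 27α⁴`; moreover the quartic `256 + 288α² − 27α⁴`
has exactly one real root `α ≤ −1`, namely `α₀ = −(4/3)√(3 + 2√3)`. (Hence
`(α₀, −√(−α₀))` is the unique intersection point with `β < 0` of the parabola
`α + β² = 0` with the curve `R(α,β) = 0`.) -/
theorem Rres_on_parabola :
    (∀ α : ℝ, α ≤ 0 →
      Rres α (-Real.sqrt (-α)) = 256 + 288 * α ^ 2 - 27 * α ^ 4) ∧
    (-(4 / 3 : ℝ) * Real.sqrt (3 + 2 * Real.sqrt 3) ≤ -1) ∧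
    (256 + 288 * (-(4 / 3 : ℝ) * Real.sqrt (3 + 2 * Real.sqrt 3)) ^ 2 -
      27 * (-(4 / 3 : ℝ) * Real.sqrt (3 + 2 * Real.sqrt 3)) ^ 4 = 0) ∧
    (∀ α : ℝ, α ≤ -1 → 256 + 288 * α ^ 2 - 27 * α ^ 4 = 0 →
      α = -(4 / 3 : ℝ) * Real.sqrt (3 + 2 * Real.sqrt 3)) := by
  have hs3 : Real.sqrt 3 ^ 2 = 3 := Real.sq_sqrt (by norm_num)
  have hs3nn : (0:ℝ) ≤ Real.sqrt 3 := Real.sqrt_nonneg 3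
  have hs3ge : (1:ℝ) ≤ Real.sqrt 3 := by nlinarith
  set s : ℝ := Real.sqrt (3 + 2 * Real.sqrt 3) with hsdef
  have hs : s ^ 2 = 3 + 2 * Real.sqrt 3 := Real.sq_sqrt (by nlinarith)
  have hsnn : (0:ℝ) ≤ s := Real.sqrt_nonneg _
  refine ⟨?_, ?_, ?_, ?_⟩
  · intro α hα
    set t : ℝ := Real.sqrt (-α) with htdef
    have h2 : t ^ 2 = -α := Real.sq_sqrt (by linarith)
    have h4 : t ^ 4 = α ^ 2 := by rw [show t ^ 4 = (t ^ 2) ^ 2 by ring, h2]; ring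
    have h6 : t ^ 6 = -α ^ 3 := by rw [show t ^ 6 = (t ^ 2) ^ 3 by ring, h2]; ring
    have h8 : t ^ 8 = α ^ 4 := by rw [show t ^ 8 = (t ^ 2) ^ 4 by ring, h2]; ring
    have : Rres α (-t) =
        -256 * (α ^ 2 - 1) ^ 3 - 192 * α * (α ^ 4 + 7 * α ^ 2 + 28) * t ^ 2 +
          60 * (α ^ 4 - 28 * α ^ 2 - 72) * t ^ 4 - 4 * α * (α ^ 2 - 108) * t ^ 6 -
          27 * t ^ 8 := by
      simp only [Rres]; ring
    rw [this, h2, h4, h6, h8]; ring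
  · nlinarith
  · linear_combination (512 - 256 / 3 * (s ^ 2 + 3 + 2 * Real.sqrt 3)) * hs
      - (1024 / 3) * hs3
  · intro α hα heq
    have hα2 : α ^ 2 = 16 / 3 + 32 / 9 * Real.sqrt 3 := by
      have hfac : (α ^ 2 - (16 / 3 + 32 / 9 * Real.sqrt 3)) *
          (27 * α ^ 2 - (144 - 96 * Real.sqrt 3)) = 0 := by
        linear_combination -heq - 1024 / 3 * hs3
      have hpos : 27 * α ^ 2 - (144 - 96 * Real.sqrt 3) > 0 := by
        nlinarith
      have := mul_eq_zero.mp hfac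
      rcases this with h | h
      · linarith
      · linarith
    have hsq : α ^ 2 = ((4 / 3 : ℝ) * s) ^ 2 := by
      rw [hα2]; nlinarith [hs]
    have hfac2 : (α - (4 / 3 : ℝ) * s) * (α + (4 / 3 : ℝ) * s) = 0 := by nlinarith [hsq]
    rcases mul_eq_zero.mp hfac2 with h | h
    · nlinarith
    · linarith
end
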